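/- Let (R, m) be a Noetherian local ring. If R has only finitely many trace ideals, then dim R ≤ 1. -/

import Mathlib

/-!
Suppose `p₀ < p₁ < p₂` are primes; pick `y ∈ p₁ \ p₀` and `x ∈ p₂ \ p₁`. A linear form `f` on
`(xⁿ, y)` satisfies `y f(xⁿ) = xⁿ f(y)`, so `tr (xⁿ, y) ⊆ (xⁿ : y) + (y : xⁿ)`. The second colon
lies in `p₁`, and by Artin–Rees the first lies in `(x^(n-c)) + ann y ⊆ (x^(n-c)) + p₁`. As there
are only finitely many trace ideals, a single one equals `tr (xⁿ, y)` for infinitely many `n`; it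
contains some `x^n₀` and lies in every `(x^j) + p₁`, so Krull's intersection theorem in the domain
`R ⧸ p₁` forces `x^n₀ ∈ p₁`, a contradiction.
-/

/-- The trace ideal of an `R`-module `M`. -/
def traceIdeal (R : Type*) [CommRing R] (M : Type*) [AddCommGroup M] [Module R M] : Ideal R :=
  ⨆ f : M →ₗ[R] R, LinearMap.range f

section

variable {R : Type*} [CommRing R] {M : Type*} [AddCommGroup M] [Module R M]

theorem range_le_traceIdeal (f : M →ₗ[R] R) : LinearMap.range f ≤ traceIdeal R M :=
  le_iSup (fun f : M →ₗ[R] R => LinearMap.range f) f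

theorem Ideal.le_traceIdeal (I : Ideal R) : I ≤ traceIdeal R I := by
  simpa using range_le_traceIdeal I.subtype

theorem traceIdeal_eq_span :
    traceIdeal R M = Ideal.span (⋃ f : M →ₗ[R] R, Set.range f) := by
  simp only [traceIdeal, Submodule.iSup_eq_span, LinearMap.coe_range]

theorem LinearMap.range_le_of_forall_mem_generators {S : Set R} {I N : Ideal R}
    (hI : Ideal.span S = I) {f : I →ₗ[R] R} (h : ∀ s : I, (s : R) ∈ S → f s ∈ N) :
    LinearMap.range f ≤ N := by
  subst hI
  rw [LinearMap.range_eq_map, ← Submodule.span_span_coe_preimage, Submodule.map_span_le]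
  exact h

theorem traceIdeal_traceIdeal : traceIdeal R (traceIdeal R M) = traceIdeal R M := by
  refine le_antisymm (iSup_le fun g => ?_) (Ideal.le_traceIdeal _)
  refine g.range_le_of_forall_mem_generators traceIdeal_eq_span.symm fun t ht => ?_
  obtain ⟨f, m, hm⟩ := Set.mem_iUnion.mp ht
  rw [show t = f.codRestrict _ (fun m => range_le_traceIdeal f ⟨m, rfl⟩) m from
    Subtype.ext hm.symm]
  exact range_le_traceIdeal (g ∘ₗ _) ⟨m, rfl⟩

theorem Ideal.apply_mul_eq_mul_apply {I : Ideal R} (f : I →ₗ[R] R) (s t : I) :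
    f s * t = s * f t := by
  rw [mul_comm, ← smul_eq_mul, ← map_smul, ← smul_eq_mul (s : R), ← map_smul]
  congr 1
  exact Subtype.ext (mul_comm _ _)

theorem traceIdeal_span_pair_le (a b : R) :
    traceIdeal R (Ideal.span {a, b}) ≤
      (Ideal.span {a}).colon {b} ⊔ (Ideal.span {b}).colon {a} := by
  refine iSup_le fun f => f.range_le_of_forall_mem_generators rfl ?_
  have hcolon : ∀ s t : Ideal.span {a, b}, f s ∈ (Ideal.span {(s : R)}).colon {(t : R)} := by
    intro s t
    rw [Submodule.mem_colon_singleton, smul_eq_mul, Ideal.apply_mul_eq_mul_apply]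
    exact Ideal.mul_mem_right _ _ (Ideal.mem_span_singleton_self _)
  rintro s (hs | hs)
  · have h := hcolon s ⟨b, Ideal.subset_span (by simp)⟩
    rw [hs] at h
    exact Ideal.mem_sup_left h
  · have h := hcolon s ⟨a, Ideal.subset_span (by simp)⟩
    rw [hs] at h
    exact Ideal.mem_sup_right h

theorem Ideal.exists_colon_span_pow_le_sup_annihilator [IsNoetherianRing R] (x y : R) :
    ∃ c, ∀ n, (Ideal.span {x ^ (n + c)}).colon {y} ≤
      Ideal.span {x ^ n} ⊔ (Ideal.span {y}).annihilator := by
  obtain ⟨c, hc⟩ := Ideal.exists_pow_inf_eq_pow_smul (Ideal.span {x}) (Ideal.span {y})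
  refine ⟨c, fun n a ha => ?_⟩
  rw [Submodule.mem_colon_singleton, smul_eq_mul] at ha
  have hay : a * y ∈ Ideal.span {x ^ n * y} := by
    have hmem : a * y ∈ Ideal.span {x} ^ (n + c) • ⊤ ⊓ Ideal.span {y} :=
      ⟨by simpa [Ideal.span_singleton_pow] using ha,
        Ideal.mul_mem_left _ _ (Ideal.mem_span_singleton_self y)⟩
    rw [hc (n + c) le_add_self, Nat.add_sub_cancel] at hmem
    have h := Submodule.smul_mono le_rfl inf_le_right hmem
    rwa [Ideal.smul_eq_mul, Ideal.span_singleton_pow,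
      Ideal.span_singleton_mul_span_singleton] at h
  obtain ⟨d, hd⟩ := Ideal.mem_span_singleton'.mp hay
  refine Submodule.mem_sup.mpr ⟨d * x ^ n, Ideal.mem_span_singleton'.mpr ⟨d, rfl⟩,
    a - d * x ^ n, ?_, by ring⟩
  rw [Submodule.mem_annihilator_span_singleton, smul_eq_mul, sub_mul, mul_assoc, hd, sub_self]

theorem Ideal.annihilator_span_singleton_le_of_notMem {p : Ideal R} [hp : p.IsPrime] {y : R}
    (hy : y ∉ p) : (Ideal.span {y}).annihilator ≤ p := fun r hr => by
  rw [Submodule.mem_annihilator_span_singleton, smul_eq_mul] at hr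
  exact (hp.mem_or_mem (hr ▸ p.zero_mem)).resolve_right hy

theorem Ideal.colon_pow_le_of_notMem {p : Ideal R} [hp : p.IsPrime] {x y : R}
    (hx : x ∉ p) (hy : y ∈ p) (n : ℕ) : (Ideal.span {y}).colon {x ^ n} ≤ p := fun b hb => by
  rw [Submodule.mem_colon_singleton, smul_eq_mul, Ideal.mem_span_singleton'] at hb
  obtain ⟨e, he⟩ := hb
  exact ((hp.mem_or_mem (he ▸ p.mul_mem_left e hy)).resolve_right
    (fun h => hx (hp.mem_of_pow_mem n h)))

/-- Krull's intersection theorem in the domain `R ⧸ p`. -/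
theorem Ideal.mem_of_forall_mem_span_pow_sup [IsNoetherianRing R] {p : Ideal R} [p.IsPrime]
    {x z : R} (hx : Ideal.span {x} ⊔ p ≠ ⊤) (hz : ∀ j : ℕ, z ∈ Ideal.span {x ^ j} ⊔ p) :
    z ∈ p := by
  have hmap : ∀ j : ℕ, (Ideal.span {x ^ j} ⊔ p).map (Ideal.Quotient.mk p) =
      Ideal.span {Ideal.Quotient.mk p x} ^ j := by
    intro j
    rw [Ideal.map_sup, Ideal.map_quotient_self, sup_bot_eq, Ideal.map_span, Set.image_singleton,
      map_pow, Ideal.span_singleton_pow]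
  have hne : Ideal.span {Ideal.Quotient.mk p x} ≠ ⊤ := by
    intro htop
    apply hx
    have := congrArg (Ideal.comap (Ideal.Quotient.mk p)) htop
    rwa [← pow_one (Ideal.span _), ← hmap, pow_one, Ideal.comap_top,
      Ideal.comap_map_of_surjective' _ Ideal.Quotient.mk_surjective, Ideal.mk_ker, sup_assoc,
      sup_idem] at this
  have hz' : Ideal.Quotient.mk p z ∈ ⨅ j : ℕ, Ideal.span {Ideal.Quotient.mk p x} ^ j :=
    Ideal.mem_iInf.mpr fun j => hmap j ▸ Ideal.mem_map_of_mem _ (hz j)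
  rw [Ideal.iInf_pow_eq_bot_of_isDomain _ hne, Ideal.mem_bot] at hz'
  exact Ideal.Quotient.eq_zero_iff_mem.mp hz'

theorem traceIdeal_span_pow_pair_le [IsNoetherianRing R] {p : Ideal R} [p.IsPrime] {x y : R}
    (hx : x ∉ p) (hy : y ∈ p) (hann : (Ideal.span {y}).annihilator ≤ p) :
    ∃ c, ∀ j n, j + c ≤ n → traceIdeal R (Ideal.span {x ^ n, y}) ≤ Ideal.span {x ^ j} ⊔ p := by
  obtain ⟨c, hc⟩ := Ideal.exists_colon_span_pow_le_sup_annihilator x y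
  refine ⟨c, fun j n hjn => (traceIdeal_span_pair_le _ _).trans (sup_le ?_ ?_)⟩
  · obtain ⟨k, rfl⟩ : ∃ k, n = k + c := ⟨n - c, by omega⟩
    exact (hc k).trans (sup_le_sup
      (Ideal.span_singleton_le_span_singleton.mpr (pow_dvd_pow x (by omega))) hann)
  · exact (Ideal.colon_pow_le_of_notMem hx hy n).trans le_sup_right

theorem not_lt_of_lt_of_finite_traceIdeals [IsNoetherianRing R]
    (hfin : {I : Ideal R | traceIdeal R I = I}.Finite) {p₀ p₁ p₂ : Ideal R} [p₀.IsPrime]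
    [p₁.IsPrime] [p₂.IsPrime] (h01 : p₀ < p₁) : ¬p₁ < p₂ := by
  intro h12
  obtain ⟨y, hy1, hy0⟩ := SetLike.exists_of_lt h01
  obtain ⟨x, hx2, hx1⟩ := SetLike.exists_of_lt h12
  obtain ⟨c, hc⟩ := traceIdeal_span_pow_pair_le hx1 hy1
    ((Ideal.annihilator_span_singleton_le_of_notMem hy0).trans h01.le)
  have : Finite {I : Ideal R | traceIdeal R I = I} := hfin.to_subtype
  let F : ℕ → {I : Ideal R | traceIdeal R I = I} := fun n =>
    ⟨traceIdeal R (Ideal.span {x ^ n, y}), traceIdeal_traceIdeal⟩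
  obtain ⟨T, hT⟩ := Finite.exists_infinite_fiber F
  have hT : (F ⁻¹' {T}).Infinite := Set.infinite_coe_iff.mp hT
  obtain ⟨n₀, hn₀ : F n₀ = T⟩ := hT.nonempty
  have hbound : ∀ j, traceIdeal R (Ideal.span {x ^ n₀, y}) ≤ Ideal.span {x ^ j} ⊔ p₁ := by
    intro j
    obtain ⟨n, hn : F n = T, hjn⟩ := hT.exists_gt (j + c)
    rw [show traceIdeal R (Ideal.span {x ^ n₀, y}) = traceIdeal R (Ideal.span {x ^ n, y}) from
      congrArg Subtype.val (hn₀.trans hn.symm)]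
    exact hc j n hjn.le
  have hne : Ideal.span {x} ⊔ p₁ ≠ ⊤ := ne_top_of_le_ne_top Ideal.IsPrime.ne_top'
    (sup_le ((Ideal.span_singleton_le_iff_mem _).mpr hx2) h12.le)
  exact hx1 (Ideal.IsPrime.mem_of_pow_mem ‹_› n₀ (Ideal.mem_of_forall_mem_span_pow_sup hne
    fun j => hbound j (Ideal.le_traceIdeal _ (Ideal.subset_span (by simp)))))

end

theorem krullDim_le_one_of_finite_traceIdeals_general (R : Type*) [CommRing R] [IsNoetherianRing R]
    (hfin : {I : Ideal R | traceIdeal R I = I}.Finite) :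
    ringKrullDim R ≤ 1 := by
  rw [ringKrullDim, Order.krullDim_le_one_iff]
  intro p
  by_contra h
  rw [not_or, not_isMin_iff, not_isMax_iff] at h
  obtain ⟨⟨p₀, h01⟩, p₂, h12⟩ := h
  exact not_lt_of_lt_of_finite_traceIdeals hfin ((PrimeSpectrum.asIdeal_lt_asIdeal _ _).mpr h01)
    ((PrimeSpectrum.asIdeal_lt_asIdeal _ _).mpr h12)

/-- If a Noetherian local ring `R` has only finitely many trace ideals, then `dim R ≤ 1`. -/
theorem krullDim_le_one_of_finite_traceIdeals (R : Type*) [CommRing R] [IsNoetherianRing R]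
    [IsLocalRing R] (hfin : {I : Ideal R | traceIdeal R I = I}.Finite) :
    ringKrullDim R ≤ 1 :=
  krullDim_le_one_of_finite_traceIdeals_general R hfin
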